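/- arXiv:1803.02624 — 2 statements merged into one kernel-verified Lean document; each statement's English description precedes it below -/
import Mathlib

section
/- Let P be a symmetric transition matrix on a finite state space Ω (P x y = P y x for all x, y) satisfying the lumpability condition with respect to an equivalence relation ∼. If a probability distribution μ on Ω is the lift of a distribution μ̄ on the quotient, i.e. μ(x) = μ̄([x]) / |[x]| for all x, then its one-step evolution is the lift of the one-step evolution of μ̄ under the projected matrix: (μP)(y) = (μ̄ P̄)([y]) / |[y]| for all y ∈ Ω. -/
open Finset

noncomputable section

variable {Ω : Type*}

/-- The sum of `μ` over the equivalence class `C` of the setoid `s`. -/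
def Pushforward (s : Setoid Ω) [Fintype Ω] [DecidableEq (Quotient s)]
    (μ : Ω → ℝ) (C : Quotient s) : ℝ :=
  ∑ z ∈ Finset.univ.filter (fun z => Quotient.mk s z = C), μ z

/-- The lumpability condition. -/
def IsLumpable (s : Setoid Ω) [Fintype Ω] [DecidableEq (Quotient s)]
    (P : Ω → Ω → ℝ) : Prop :=
  ∀ x x' : Ω, s.r x x' → ∀ C : Quotient s,
    Pushforward s (P x) C = Pushforward s (P x') C

/-- The projected (lumped) transition matrix on the quotient. -/
def Proj (s : Setoid Ω) [Fintype Ω] [DecidableEq (Quotient s)]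
    (P : Ω → Ω → ℝ) (C D : Quotient s) : ℝ :=
  Pushforward s (P C.out) D

/-- One step of the Markov chain: `(μP)(y) = ∑ x, μ x * P x y`. -/
def Step {S : Type*} [Fintype S] (P : S → S → ℝ) (μ : S → ℝ) : S → ℝ :=
  fun y => ∑ x, μ x * P x y

/-- The size of the equivalence class of `x`. -/
def classCard (s : Setoid Ω) [Fintype Ω] [DecidableEq (Quotient s)] (x : Ω) : ℕ :=
  (Finset.univ.filter (fun z => Quotient.mk s z = Quotient.mk s x)).card

/-- The lift of a distribution `μ` on the quotient to `Ω`. -/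
def liftDist (s : Setoid Ω) [Fintype Ω] [DecidableEq (Quotient s)]
    (μ : Quotient s → ℝ) : Ω → ℝ :=
  fun x => μ (Quotient.mk s x) / (classCard s x : ℝ)

/-!
Grouping the sum `∑ x, μ x * P x y` by classes and using the symmetry of `P` gives
`(μP)(y) = ∑ C, μ̄ C / |C| * P̄([y], C)`. Symmetry also yields detailed balance of the projected
chain with respect to the class sizes, `|C| P̄(C, D) = |D| P̄(D, C)`, which turns this sum into
`(μ̄P̄)([y]) / |[y]|`.
-/

section Lumping

variable [Fintype Ω] (s : Setoid Ω) [DecidableEq (Quotient s)]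

def classFinset (C : Quotient s) : Finset Ω :=
  univ.filter fun z => Quotient.mk s z = C

lemma mem_classFinset {C : Quotient s} {x : Ω} :
    x ∈ classFinset s C ↔ Quotient.mk s x = C := by
  simp [classFinset]

lemma classFinset_card_pos (C : Quotient s) : 0 < #(classFinset s C) :=
  card_pos.mpr ⟨C.out, (mem_classFinset s).2 C.out_eq⟩

lemma classCard_eq_card_classFinset (x : Ω) :
    classCard s x = #(classFinset s (Quotient.mk s x)) :=
  rfl

variable {s} {P : Ω → Ω → ℝ}

lemma IsLumpable.pushforward_eq_proj (hlump : IsLumpable s P) (x : Ω) (C : Quotient s) :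
    Pushforward s (P x) C = Proj s P (Quotient.mk s x) C :=
  hlump _ _ (Setoid.symm (Quotient.mk_out x)) C

lemma IsLumpable.card_mul_proj (hlump : IsLumpable s P) (C D : Quotient s) :
    (#(classFinset s C) : ℝ) * Proj s P C D =
      ∑ x ∈ classFinset s C, ∑ z ∈ classFinset s D, P x z := by
  rw [← nsmul_eq_mul, ← sum_const]
  refine sum_congr rfl fun x hx => ?_
  rw [← (mem_classFinset s).1 hx, ← hlump.pushforward_eq_proj]
  rfl

lemma IsLumpable.card_mul_proj_comm (hlump : IsLumpable s P) (hsym : ∀ x y, P x y = P y x)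
    (C D : Quotient s) :
    (#(classFinset s C) : ℝ) * Proj s P C D = #(classFinset s D) * Proj s P D C := by
  rw [hlump.card_mul_proj, hlump.card_mul_proj, sum_comm]
  exact sum_congr rfl fun _ _ => sum_congr rfl fun _ _ => hsym _ _

lemma IsLumpable.step_liftDist_eq_sum (hlump : IsLumpable s P) (hsym : ∀ x y, P x y = P y x)
    [Fintype (Quotient s)] (μbar : Quotient s → ℝ) (y : Ω) :
    Step P (liftDist s μbar) y =
      ∑ C, μbar C / #(classFinset s C) * Proj s P (Quotient.mk s y) C := by
  calc Step P (liftDist s μbar) y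
      = ∑ C, ∑ x ∈ classFinset s C, liftDist s μbar x * P x y :=
        (sum_fiberwise univ (Quotient.mk s) _).symm
    _ = ∑ C, ∑ x ∈ classFinset s C, μbar C / #(classFinset s C) * P y x := by
        refine sum_congr rfl fun C _ => sum_congr rfl fun x hx => ?_
        rw [liftDist, classCard_eq_card_classFinset, (mem_classFinset s).1 hx, hsym]
    _ = ∑ C, μbar C / #(classFinset s C) * Proj s P (Quotient.mk s y) C := by
        refine sum_congr rfl fun C _ => ?_
        rw [← mul_sum, ← hlump.pushforward_eq_proj]
        rfl

end Lumping

theorem step_liftDist_general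
    [Fintype Ω] (s : Setoid Ω) [DecidableEq (Quotient s)] [Fintype (Quotient s)]
    (P : Ω → Ω → ℝ)
    (hsym : ∀ x y, P x y = P y x)
    (hlump : IsLumpable s P)
    (μbar : Quotient s → ℝ)
    (μ : Ω → ℝ) (hμ : ∀ x, μ x = liftDist s μbar x) :
    ∀ y : Ω, Step P μ y = liftDist s (Step (Proj s P) μbar) y := by
  intro y
  obtain rfl : μ = liftDist s μbar := funext hμ
  rw [hlump.step_liftDist_eq_sum hsym, liftDist, Step, classCard_eq_card_classFinset, sum_div]
  refine sum_congr rfl fun C _ => ?_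
  have hC : (#(classFinset s C) : ℝ) ≠ 0 := by exact_mod_cast (classFinset_card_pos s C).ne'
  have hy : (#(classFinset s (Quotient.mk s y)) : ℝ) ≠ 0 := by
    exact_mod_cast (classFinset_card_pos s _).ne'
  rw [div_mul_eq_mul_div, div_eq_div_iff hC hy]
  linear_combination μbar C * hlump.card_mul_proj_comm hsym (Quotient.mk s y) C

/-- for a symmetric lumpable transition matrix, the one-step evolution of
a lifted distribution is the lift of the one-step evolution under the projected matrix:
`(μP)(y) = (μ̄P̄)([y]) / |[y]|`. -/
theorem step_liftDist
    [Fintype Ω] (s : Setoid Ω) [DecidableEq (Quotient s)] [Fintype (Quotient s)]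
    (P : Ω → Ω → ℝ)
    (hP0 : ∀ x y, 0 ≤ P x y) (hP1 : ∀ x, ∑ y, P x y = 1)
    (hsym : ∀ x y, P x y = P y x)
    (hlump : IsLumpable s P)
    (μbar : Quotient s → ℝ) (hμ0 : ∀ C, 0 ≤ μbar C) (hμ1 : ∑ C, μbar C = 1)
    (μ : Ω → ℝ) (hμ : ∀ x, μ x = liftDist s μbar x) :
    ∀ y : Ω, Step P μ y = liftDist s (Step (Proj s P) μbar) y :=
  step_liftDist_general s P hsym hlump μbar μ hμ
end
end

section
/- Let P be a symmetric transition matrix on a nonempty finite state space Ω satisfying the lumpability condition with respect to an equivalence relation ∼; let π be the uniform distribution on Ω and π̄ its pushforward on the quotient Ω̄. For x ∈ Ω let 𝟙̄_x be the distribution uniform on the class [x] and zero elsewhere. Then for every ε > 0 and T ∈ ℕ: (for all x ∈ Ω and all t > T, d_V(𝟙̄_x P^t, π) ≤ ε) if and only if (for all classes C ∈ Ω̄ and all t > T, d_V(𝟙_C P̄^t, π̄) ≤ ε). In other words, the mixing time of the chain started from the uniform distribution on an equivalence class equals the mixing time of the projected chain: τ̂(ε) = τ̄(ε). -/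
open Finset

noncomputable section

variable {Ω : Type*}

/-- The one-point distribution at `x`. -/
def onePoint {S : Type*} [DecidableEq S] (x : S) : S → ℝ :=
  fun y => if y = x then 1 else 0

/-- The distribution that is uniform on the class of `x` and zero elsewhere. -/
def classUniform (s : Setoid Ω) [Fintype Ω] [DecidableEq (Quotient s)] (x : Ω) : Ω → ℝ :=
  fun y =>
    if Quotient.mk s y = Quotient.mk s x then 1 / (classCard s x : ℝ) else 0

/-- The uniform distribution on a finite set. -/
def uniformDist (S : Type*) [Fintype S] : S → ℝ :=
  fun _ => 1 / (Fintype.card S : ℝ)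

/-- Total variation distance between two distributions on a finite set. -/
def dV {S : Type*} [Fintype S] (μ ν : S → ℝ) : ℝ :=
  (1 / 2) * ∑ x, |μ x - ν x|

/-!
The pushforward along `Ω → Ω/∼` intertwines `P` with the projected chain `P̄` (lumpability)
and sends `𝟙̄_x` to `𝟙_[x]` and `π` to `π̄`. By symmetry and lumpability, `𝟙̄_x P^t` stays
constant on classes, and between class-constant distributions the pushforward preserves the
total variation distance. Hence `d_V(𝟙̄_x P^t, π) = d_V(𝟙_[x] P̄^t, π̄)` for all `x` and `t`.
-/

def IsClassConstant {β : Type*} (s : Setoid Ω) (μ : Ω → β) : Prop :=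
  ∀ ⦃x y⦄, s.r x y → μ x = μ y

theorem isClassConstant_uniformDist [Fintype Ω] (s : Setoid Ω) :
    IsClassConstant s (uniformDist Ω) :=
  fun _ _ _ => rfl

section Pushforward

variable [Fintype Ω] (s : Setoid Ω) [DecidableEq (Quotient s)]

theorem IsLumpable.isClassConstant_pushforward {P : Ω → Ω → ℝ} (hlump : IsLumpable s P)
    (C : Quotient s) : IsClassConstant s fun x => Pushforward s (P x) C :=
  fun x y hxy => hlump x y hxy C

theorem isClassConstant_classUniform (x : Ω) : IsClassConstant s (classUniform s x) := by
  intro y y' hyy'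
  simp only [classUniform, Quotient.sound hyy']

theorem pushforward_sub (μ ν : Ω → ℝ) (C : Quotient s) :
    Pushforward s (μ - ν) C = Pushforward s μ C - Pushforward s ν C :=
  Finset.sum_sub_distrib _ _

theorem pushforward_mk_of_isClassConstant {μ : Ω → ℝ} (hμ : IsClassConstant s μ) (x : Ω) :
    Pushforward s μ (Quotient.mk s x) = classCard s x * μ x := by
  rw [Pushforward, classCard, ← nsmul_eq_mul, ← Finset.sum_const]
  exact Finset.sum_congr rfl fun z hz => hμ (Quotient.exact (Finset.mem_filter.mp hz).2)

theorem abs_pushforward_of_isClassConstant {μ : Ω → ℝ} (hμ : IsClassConstant s μ)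
    (C : Quotient s) : |Pushforward s μ C| = Pushforward s (fun x => |μ x|) C := by
  induction C using Quotient.ind with
  | _ x =>
    have habs : IsClassConstant s fun x => |μ x| := fun _ _ h => congrArg abs (hμ h)
    rw [pushforward_mk_of_isClassConstant s hμ, pushforward_mk_of_isClassConstant s habs,
      abs_mul, Nat.abs_cast]

theorem pushforward_classUniform (x : Ω) :
    Pushforward s (classUniform s x) = onePoint (Quotient.mk s x) := by
  funext C
  induction C using Quotient.ind with
  | _ y =>
    rw [pushforward_mk_of_isClassConstant s (isClassConstant_classUniform s x), classUniform,
      onePoint]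
    by_cases hyx : Quotient.mk s y = Quotient.mk s x
    · have hcard : (classCard s y : ℝ) ≠ 0 := by
        rw [Nat.cast_ne_zero, ← Nat.pos_iff_ne_zero, classCard, Finset.card_pos]
        exact ⟨y, Finset.mem_filter.mpr ⟨Finset.mem_univ y, rfl⟩⟩
      have hcard_eq : classCard s y = classCard s x := by simp only [classCard, hyx]
      rw [if_pos hyx, if_pos hyx, ← hcard_eq, mul_one_div_cancel hcard]
    · rw [if_neg hyx, if_neg hyx, mul_zero]

variable [Fintype (Quotient s)]

theorem sum_pushforward (μ : Ω → ℝ) : ∑ C, Pushforward s μ C = ∑ x, μ x :=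
  Finset.sum_fiberwise Finset.univ (Quotient.mk s) μ

theorem sum_mul_of_isClassConstant (μ : Ω → ℝ) {f : Ω → ℝ} (hf : IsClassConstant s f) :
    ∑ x, μ x * f x = ∑ C, Pushforward s μ C * f C.out := by
  rw [← Finset.sum_fiberwise Finset.univ (Quotient.mk s)]
  refine Finset.sum_congr rfl fun C _ => ?_
  rw [Pushforward, Finset.sum_mul]
  refine Finset.sum_congr rfl fun x hx => ?_
  have hxC : Quotient.mk s x = Quotient.mk s C.out :=
    (Finset.mem_filter.mp hx).2.trans C.out_eq.symm
  rw [hf (Quotient.exact hxC)]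

theorem dV_pushforward_of_isClassConstant {μ ν : Ω → ℝ} (hμ : IsClassConstant s μ)
    (hν : IsClassConstant s ν) : dV (Pushforward s μ) (Pushforward s ν) = dV μ ν := by
  have hsub : IsClassConstant s (μ - ν) := fun x y h => by
    simp only [Pi.sub_apply, hμ h, hν h]
  unfold dV
  simp_rw [← pushforward_sub, abs_pushforward_of_isClassConstant s hsub, sum_pushforward,
    Pi.sub_apply]

end Pushforward

section Step

variable [Fintype Ω] (s : Setoid Ω) [DecidableEq (Quotient s)] [Fintype (Quotient s)]
  {P : Ω → Ω → ℝ}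

theorem IsLumpable.semiconj_pushforward_step (hlump : IsLumpable s P) :
    Function.Semiconj (Pushforward s) (Step P) (Step (Proj s P)) := by
  intro μ
  funext C
  have hswap : Pushforward s (Step P μ) C = ∑ x, μ x * Pushforward s (P x) C := by
    simp only [Pushforward, Step, Finset.mul_sum]
    exact Finset.sum_comm
  rw [hswap, sum_mul_of_isClassConstant s μ (hlump.isClassConstant_pushforward s C)]
  rfl

-- Symmetry turns `(μP)(y)` into a sum over `P y ·`, to which lumpability applies.
theorem IsLumpable.isClassConstant_step (hlump : IsLumpable s P)
    (hsym : ∀ x y, P x y = P y x) {μ : Ω → ℝ} (hμ : IsClassConstant s μ) :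
    IsClassConstant s (Step P μ) := by
  have hstep : ∀ y, Step P μ y = ∑ C, Pushforward s (P y) C * μ C.out := fun y => by
    simp only [Step, hsym _ y, mul_comm (μ _)]
    exact sum_mul_of_isClassConstant s (P y) hμ
  intro y y' hyy'
  simp only [hstep, hlump y y' hyy']

theorem IsLumpable.dV_proj_iterate_onePoint (hlump : IsLumpable s P)
    (hsym : ∀ x y, P x y = P y x) (x : Ω) (t : ℕ) :
    dV ((Step (Proj s P))^[t] (onePoint (Quotient.mk s x))) (Pushforward s (uniformDist Ω)) =
      dV ((Step P)^[t] (classUniform s x)) (uniformDist Ω) := by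
  have hclass : IsClassConstant s ((Step P)^[t] (classUniform s x)) :=
    Function.Iterate.rec (IsClassConstant s) (isClassConstant_classUniform s x)
      (fun _ => hlump.isClassConstant_step s hsym) t
  rw [← pushforward_classUniform, ← (hlump.semiconj_pushforward_step s).iterate_right t,
    dV_pushforward_of_isClassConstant s hclass (isClassConstant_uniformDist s)]

end Step

theorem mixing_time_classUniform_eq_proj_general
    [Fintype Ω] (s : Setoid Ω) [DecidableEq (Quotient s)]
    [Fintype (Quotient s)]
    (P : Ω → Ω → ℝ)
    (hsym : ∀ x y, P x y = P y x)
    (hlump : IsLumpable s P)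
    (ε : ℝ) (T : ℕ) :
    (∀ (x : Ω) (t : ℕ), T < t →
        dV ((Step P)^[t] (classUniform s x)) (uniformDist Ω) ≤ ε) ↔
    (∀ (C : Quotient s) (t : ℕ), T < t →
        dV ((Step (Proj s P))^[t] (onePoint C)) (Pushforward s (uniformDist Ω)) ≤ ε) := by
  rw [Quotient.forall]
  simp only [hlump.dV_proj_iterate_onePoint s hsym]

/-- the mixing time of the chain started from the uniform distribution on
an equivalence class equals the mixing time of the projected chain: `τ̂(ε) = τ̄(ε)`. -/
theorem mixing_time_classUniform_eq_proj
    [Fintype Ω] [Nonempty Ω] (s : Setoid Ω) [DecidableEq (Quotient s)]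
    [Fintype (Quotient s)]
    (P : Ω → Ω → ℝ)
    (hP0 : ∀ x y, 0 ≤ P x y) (hP1 : ∀ x, ∑ y, P x y = 1)
    (hsym : ∀ x y, P x y = P y x)
    (hlump : IsLumpable s P)
    (ε : ℝ) (hε : 0 < ε) (T : ℕ) :
    (∀ (x : Ω) (t : ℕ), T < t →
        dV ((Step P)^[t] (classUniform s x)) (uniformDist Ω) ≤ ε) ↔
    (∀ (C : Quotient s) (t : ℕ), T < t →
        dV ((Step (Proj s P))^[t] (onePoint C)) (Pushforward s (uniformDist Ω)) ≤ ε) :=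
  mixing_time_classUniform_eq_proj_general s P hsym hlump ε T
end
end
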